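/- arXiv:1612.08086 — 2 statements merged into one kernel-verified Lean document; each statement's English description precedes it below -/
import Mathlib

section
/- If f : I → ℝ is convex and x, y ∈ I with x < y, then 0 ≤ (1/(y-x)) ∫ₓʸ f(t) dt − f((x+y)/2) ≤ (f(x)+f(y))/2 − (1/(y-x)) ∫ₓʸ f(t) dt; that is, the remainder of the Midpoint Rule is nonnegative and not greater than the remainder of the Trapezoid Rule. -/
/-!
Hermite–Hadamard by reflection: pairing `t` with `a + b - t`, convexity gives
`2 f((a+b)/2) ≤ f(t) + f(a+b-t) ≤ f(a) + f(b)`, so the mean of `f` over `[a, b]` lies between the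
midpoint value and the endpoint average. Applying the upper bound on the two halves of `[x, y]`
bounds the mean by `(f x + f y)/4 + f(m)/2` with `m` the midpoint, which is the claimed comparison
of the two remainders.
-/

open MeasureTheory Set

section Reflection

variable {E : Type*} [AddCommGroup E] [Module ℝ E] {s : Set E} {f : E → ℝ} {a b t : E}

theorem ConvexOn.two_mul_map_midpoint_le_add_reflect (hf : ConvexOn ℝ s f) (ht : t ∈ s)
    (ht' : a + b - t ∈ s) : 2 * f (midpoint ℝ a b) ≤ f t + f (a + b - t) := by
  have hmid : (1 / 2 : ℝ) • t + (1 / 2 : ℝ) • (a + b - t) = midpoint ℝ a b := by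
    rw [midpoint_eq_smul_add]; simp only [invOf_eq_inv]; module
  have := hf.2 ht ht' (by norm_num : (0 : ℝ) ≤ 1 / 2) (by norm_num : (0 : ℝ) ≤ 1 / 2)
    (by norm_num)
  rw [hmid, smul_eq_mul, smul_eq_mul] at this
  linarith

theorem ConvexOn.add_map_reflect_le (hf : ConvexOn ℝ s f) (ha : a ∈ s) (hb : b ∈ s)
    (ht : t ∈ segment ℝ a b) : f t + f (a + b - t) ≤ f a + f b := by
  obtain ⟨p, q, hp, hq, hpq, rfl⟩ := ht
  have hrefl : a + b - (p • a + q • b) = q • a + p • b := by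
    linear_combination (norm := module) (-hpq) • (a + b)
  have h₁ := hf.2 ha hb hp hq hpq
  have h₂ := hf.2 ha hb hq hp (by rw [add_comm, hpq])
  rw [hrefl]
  simp only [smul_eq_mul] at h₁ h₂
  linear_combination h₁ + h₂ + (f a + f b) * hpq

end Reflection

section Interval

variable {s : Set ℝ} {f : ℝ → ℝ} {a b : ℝ}

theorem ConvexOn.mapsTo_Icc (hf : ConvexOn ℝ s f) (ha : a ∈ s) (hb : b ∈ s) (hab : a ≤ b) :
    MapsTo f (Icc a b) (Icc (2 * f (midpoint ℝ a b) - max (f a) (f b)) (max (f a) (f b))) := by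
  have hsub : Icc a b ⊆ s := hf.1.ordConnected.out ha hb
  have hupper : ∀ t ∈ Icc a b, f t ≤ max (f a) (f b) := fun t ht ↦
    hf.le_on_segment ha hb (by rwa [segment_eq_Icc hab])
  intro t ht
  have ht' : a + b - t ∈ Icc a b := ⟨by linarith [ht.2], by linarith [ht.1]⟩
  have := hf.two_mul_map_midpoint_le_add_reflect (hsub ht) (hsub ht')
  exact ⟨by linarith [hupper _ ht'], hupper t ht⟩

theorem ConvexOn.intervalIntegrable (hf : ConvexOn ℝ s f) (ha : a ∈ s) (hb : b ∈ s) :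
    IntervalIntegrable f volume a b := by
  wlog hab : a ≤ b generalizing a b
  · exact (this hb ha (le_of_not_ge hab)).symm
  have hcont : ContinuousOn f (Ioo a b) := hf.continuousOn_interior.mono <| by
    rw [← interior_Icc]; exact interior_mono (hf.1.ordConnected.out ha hb)
  rw [intervalIntegrable_iff_integrableOn_Ioo_of_le hab]
  have hbound : ∀ t ∈ Ioo a b,
      ‖f t‖ ≤ max |2 * f (midpoint ℝ a b) - max (f a) (f b)| |max (f a) (f b)| := by
    intro t ht
    obtain ⟨hlow, hup⟩ := hf.mapsTo_Icc ha hb hab (Ioo_subset_Icc_self ht)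
    exact abs_le_max_abs_abs hlow hup
  exact ⟨hcont.aestronglyMeasurable measurableSet_Ioo, .restrict_of_bounded _
    measure_Ioo_lt_top (ae_restrict_of_forall_mem measurableSet_Ioo hbound)⟩

theorem IntervalIntegrable.comp_reflect (hf : IntervalIntegrable f volume a b) :
    IntervalIntegrable (fun t ↦ f (a + b - t)) volume a b := by
  simpa using (hf.comp_sub_left (a + b)).symm

theorem integral_add_comp_reflect (hf : IntervalIntegrable f volume a b) :
    ∫ t in a..b, (f t + f (a + b - t)) = 2 * ∫ t in a..b, f t := by
  rw [intervalIntegral.integral_add hf hf.comp_reflect, intervalIntegral.integral_comp_sub_left,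
    add_sub_cancel_right, add_sub_cancel_left, two_mul]

theorem ConvexOn.sub_mul_map_midpoint_le_integral (hf : ConvexOn ℝ s f) (ha : a ∈ s)
    (hb : b ∈ s) (hab : a ≤ b) : (b - a) * f ((a + b) / 2) ≤ ∫ t in a..b, f t := by
  have hsub : Icc a b ⊆ s := hf.1.ordConnected.out ha hb
  have hmid : midpoint ℝ a b = (a + b) / 2 := by
    rw [midpoint_eq_smul_add, smul_eq_mul, invOf_eq_inv]; ring
  have hpt : ∀ t ∈ Icc a b, 2 * f ((a + b) / 2) ≤ f t + f (a + b - t) := fun t ht ↦ by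
    have ht' : a + b - t ∈ Icc a b := ⟨by linarith [ht.2], by linarith [ht.1]⟩
    simpa [hmid] using hf.two_mul_map_midpoint_le_add_reflect (hsub ht) (hsub ht')
  have hfi := hf.intervalIntegrable ha hb
  have := intervalIntegral.integral_mono_on hab intervalIntegrable_const
    (hfi.add hfi.comp_reflect) hpt
  rw [intervalIntegral.integral_const, integral_add_comp_reflect hfi, smul_eq_mul] at this
  linarith

theorem ConvexOn.integral_le_sub_mul_add_div_two (hf : ConvexOn ℝ s f) (ha : a ∈ s)
    (hb : b ∈ s) (hab : a ≤ b) : ∫ t in a..b, f t ≤ (b - a) * ((f a + f b) / 2) := by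
  have hpt : ∀ t ∈ Icc a b, f t + f (a + b - t) ≤ f a + f b := fun t ht ↦
    hf.add_map_reflect_le ha hb (by rwa [segment_eq_Icc hab])
  have hfi := hf.intervalIntegrable ha hb
  have := intervalIntegral.integral_mono_on hab (hfi.add hfi.comp_reflect)
    intervalIntegrable_const hpt
  rw [intervalIntegral.integral_const, integral_add_comp_reflect hfi, smul_eq_mul] at this
  linarith

theorem ConvexOn.integral_le_sub_mul_bisected_trapezoid (hf : ConvexOn ℝ s f) (ha : a ∈ s)
    (hb : b ∈ s) (hab : a ≤ b) :
    ∫ t in a..b, f t ≤ (b - a) * ((f a + f b) / 4 + f ((a + b) / 2) / 2) := by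
  set m := (a + b) / 2 with hm_def
  have hm : m ∈ s := hf.1.ordConnected.out ha hb ⟨by linarith, by linarith⟩
  have hleft := hf.integral_le_sub_mul_add_div_two ha hm (by linarith)
  have hright := hf.integral_le_sub_mul_add_div_two hm hb (by linarith)
  rw [show m - a = (b - a) / 2 by linarith] at hleft
  rw [show b - m = (b - a) / 2 by linarith] at hright
  rw [← intervalIntegral.integral_add_adjacent_intervals (hf.intervalIntegrable ha hm)
    (hf.intervalIntegrable hm hb)]
  linarith

end Interval

theorem midpoint_remainder_le_trapezoid_remainder (I : Set ℝ) (f : ℝ → ℝ)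
    (hf : ConvexOn ℝ I f) (x y : ℝ) (hx : x ∈ I) (hy : y ∈ I) (hxy : x < y) :
    0 ≤ (1 / (y - x)) * (∫ t in x..y, f t) - f ((x + y) / 2) ∧
    (1 / (y - x)) * (∫ t in x..y, f t) - f ((x + y) / 2) ≤
      (f x + f y) / 2 - (1 / (y - x)) * ∫ t in x..y, f t := by
  have hyx : 0 < y - x := sub_pos.2 hxy
  have hmid := hf.sub_mul_map_midpoint_le_integral hx hy hxy.le
  have htrap := hf.integral_le_sub_mul_bisected_trapezoid hx hy hxy.le
  have hlow : f ((x + y) / 2) ≤ 1 / (y - x) * ∫ t in x..y, f t := by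
    rw [one_div_mul_eq_div, le_div_iff₀' hyx]; exact hmid
  have hup : 1 / (y - x) * ∫ t in x..y, f t ≤ (f x + f y) / 4 + f ((x + y) / 2) / 2 := by
    rw [one_div_mul_eq_div, div_le_iff₀' hyx]; exact htrap
  constructor <;> linarith
end

section
/- If f ∈ C⁴[−1,1] then there exists ξ ∈ [−1,1] such that ∫₋₁¹ f(t) dt = (1/2)[f(−√3/3) + f(√3/3)] + (1/2)[(1/3)f(−1) + (4/3)f(0) + (1/3)f(1)] − f⁽⁴⁾(ξ)/540. -/
/-!
The rule `Q f = ½ (f (-√3/3) + f (√3/3)) + ⅙ (f (-1) + 4 f 0 + f 1)` integrates cubics exactly, so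
Taylor's theorem with integral remainder turns its error `Q f - ∫ f` into `∫ K f⁽⁴⁾`, where
`K t = Q ((· - t)₊³ / 3!) - (1 - t)⁴ / 4!` is the Peano kernel. On each of the four pieces cut out
by the nodes, `K` is a nonnegative quartic, so the first mean value theorem for integrals yields
`Q f - ∫ f = f⁽⁴⁾ ξ * ∫ K`, and `∫ K = Q ((· + 1)⁴ / 4!) - 2⁵ / 5! = 1 / 540`.
-/

open Set intervalIntegral
open MeasureTheory (volume)
open scoped Nat

theorem iteratedDerivWithin_eq_of_subset {𝕜 F : Type*} [NontriviallyNormedField 𝕜]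
    [NormedAddCommGroup F] [NormedSpace 𝕜 F] {f : 𝕜 → F} {s t : Set 𝕜} {x : 𝕜} {n : ℕ}
    (hst : s ⊆ t) (hs : UniqueDiffOn 𝕜 s) (ht : UniqueDiffOn 𝕜 t) (hf : ContDiffOn 𝕜 n f t)
    (hx : x ∈ s) : iteratedDerivWithin n f s x = iteratedDerivWithin n f t x := by
  simp only [iteratedDerivWithin_eq_iteratedFDerivWithin,
    iteratedFDerivWithin_subset hst hs ht hf hx]

theorem integral_sub_pow_div_factorial (a x : ℝ) (n : ℕ) :
    ∫ t in a..x, (x - t) ^ n / n ! = (x - a) ^ (n + 1) / (n + 1)! := by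
  rw [intervalIntegral.integral_div, integral_comp_sub_left (fun t => t ^ n), integral_pow,
    sub_self, zero_pow n.succ_ne_zero, sub_zero, Nat.factorial_succ]
  push_cast
  field_simp

section Taylor

variable {f : ℝ → ℝ} {a b x : ℝ} {n : ℕ}

theorem taylor_integral_remainder_Icc (hf : ContDiffOn ℝ (n + 1) f (Icc a b)) (hx : x ∈ Icc a b) :
    f x = ∑ k ∈ Finset.range (n + 1), (x - a) ^ k / k ! * iteratedDerivWithin k f (Icc a b) a +
      ∫ t in a..x, (x - t) ^ n / n ! * iteratedDerivWithin (n + 1) f (Icc a b) t := by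
  rcases hx.1.eq_or_lt with rfl | hax
  · simp [Finset.sum_range_succ']
  have hsub : Icc a x ⊆ Icc a b := Icc_subset_Icc_right hx.2
  have hderiv : ∀ k ≤ n + 1, ∀ y ∈ Icc a x,
      iteratedDerivWithin k f (Icc a x) y = iteratedDerivWithin k f (Icc a b) y :=
    fun k hk y hy => iteratedDerivWithin_eq_of_subset hsub (uniqueDiffOn_Icc hax)
      (uniqueDiffOn_Icc (hax.trans_le hx.2)) (hf.of_le (by exact_mod_cast hk)) hy
  have h := taylor_integral_remainder (hf.mono (uIcc_of_le hax.le ▸ hsub))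
  rw [uIcc_of_le hax.le, taylor_within_apply, sub_eq_iff_eq_add'] at h
  rw [h]
  congr 1
  · refine Finset.sum_congr rfl fun k hk => ?_
    rw [smul_eq_mul, hderiv k (by grind) a (left_mem_Icc.2 hax.le)]
    ring
  · refine integral_congr fun t ht => ?_
    rw [uIcc_of_le hax.le] at ht
    simp only [smul_eq_mul, hderiv (n + 1) le_rfl t ht]

theorem hasDerivWithinAt_integral_Icc (hf : ContinuousOn f (Icc a b)) (hx : x ∈ Icc a b) :
    HasDerivWithinAt (fun y => ∫ t in a..y, f t) (f x) (Icc a b) x := by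
  have : Fact (x ∈ Icc a b) := ⟨hx⟩
  exact integral_hasDerivWithinAt_right
    ((hf.mono (uIcc_subset_Icc (left_mem_Icc.2 (hx.1.trans hx.2)) hx)).intervalIntegrable)
    (hf.stronglyMeasurableAtFilter_nhdsWithin measurableSet_Icc x) (hf x hx)

theorem integral_eq_taylor_add_remainder_Icc (hab : a < b) (hf : ContDiffOn ℝ n f (Icc a b)) :
    ∫ t in a..b, f t = ∑ k ∈ Finset.range n,
        (b - a) ^ (k + 1) / (k + 1)! * iteratedDerivWithin k f (Icc a b) a +
      ∫ t in a..b, (b - t) ^ n / n ! * iteratedDerivWithin n f (Icc a b) t := by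
  set F : ℝ → ℝ := fun y => ∫ t in a..y, f t
  have hU := uniqueDiffOn_Icc hab
  have hFf : EqOn (derivWithin F (Icc a b)) f (Icc a b) := fun y hy =>
    (hasDerivWithinAt_integral_Icc hf.continuousOn hy).derivWithin (hU y hy)
  have hF : ContDiffOn ℝ (n + 1) F (Icc a b) := by
    rw [contDiffOn_succ_iff_derivWithin hU]
    exact ⟨fun y hy => (hasDerivWithinAt_integral_Icc hf.continuousOn hy).differentiableWithinAt,
      by simp, hf.congr hFf⟩
  have hFderiv : ∀ k, EqOn (iteratedDerivWithin (k + 1) F (Icc a b))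
      (iteratedDerivWithin k f (Icc a b)) (Icc a b) := fun k => by
    rw [iteratedDerivWithin_succ']
    exact iteratedDerivWithin_congr hFf
  have h := taylor_integral_remainder_Icc hF (right_mem_Icc.2 hab.le)
  have hmem : a ∈ Icc a b := left_mem_Icc.2 hab.le
  rw [Finset.sum_range_succ', iteratedDerivWithin_zero, show F a = 0 from integral_same,
    mul_zero, add_zero] at h
  refine h.trans (congrArg₂ _ (Finset.sum_congr rfl fun k _ => by rw [hFderiv k hmem])
    (integral_congr fun t ht => ?_))
  rw [uIcc_of_le hab.le] at ht
  rw [hFderiv n ht]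

end Taylor

section PeanoKernel

variable {ι : Type*} [Fintype ι] {f h : ℝ → ℝ} {a b y : ℝ} {n : ℕ}

theorem integral_posPart_pow_mul (hn : n ≠ 0) (hy : y ∈ Icc a b)
    (hh : IntervalIntegrable h volume a b) :
    ∫ t in a..b, (y - t)⁺ ^ n / n ! * h t = ∫ t in a..y, (y - t) ^ n / n ! * h t := by
  have hint : ∀ c d, uIcc c d ⊆ uIcc a b →
      IntervalIntegrable (fun t => (y - t)⁺ ^ n / n ! * h t) volume c d := fun c d hcd =>
    (hh.mono_set hcd).continuousOn_mul (by fun_prop)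
  have hay : uIcc a y ⊆ uIcc a b := uIcc_subset_uIcc_left (by rwa [uIcc_of_le (hy.1.trans hy.2)])
  have hyb : uIcc y b ⊆ uIcc a b := uIcc_subset_uIcc_right (by rwa [uIcc_of_le (hy.1.trans hy.2)])
  rw [← integral_add_adjacent_intervals (hint a y hay) (hint y b hyb)]
  have hleft : ∫ t in a..y, (y - t)⁺ ^ n / n ! * h t = ∫ t in a..y, (y - t) ^ n / n ! * h t :=
    integral_congr fun t ht => by
      rw [uIcc_of_le hy.1] at ht
      simp only [posPart_eq_self.2 (sub_nonneg.2 ht.2)]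
  have hright : ∫ t in y..b, (y - t)⁺ ^ n / n ! * h t = 0 := by
    refine (integral_congr fun t ht => ?_).trans integral_zero
    rw [uIcc_of_le hy.2] at ht
    simp [posPart_eq_zero.2 (sub_nonpos.2 ht.1), zero_pow hn]
  rw [hleft, hright, add_zero]

/-- The error of the rule `∑ i, w i * g (x i) ≈ ∫ s in a..b, g s` on `g = (· - t)₊ ^ n / n !`;
for `a ≤ t ≤ b` the integral is `(b - t) ^ (n + 1) / (n + 1)!`, independent of `a`. -/
noncomputable def peanoKernel (n : ℕ) (b : ℝ) (w x : ι → ℝ) (t : ℝ) : ℝ :=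
  ∑ i, w i * ((x i - t)⁺ ^ n / n !) - (b - t) ^ (n + 1) / (n + 1)!

variable {w x : ι → ℝ}

theorem continuous_peanoKernel : Continuous (peanoKernel n b w x) := by
  unfold peanoKernel
  fun_prop

theorem integral_peanoKernel_mul (hh : IntervalIntegrable h volume a b) :
    ∫ t in a..b, peanoKernel n b w x t * h t =
      ∑ i, w i * (∫ t in a..b, (x i - t)⁺ ^ n / n ! * h t) -
        ∫ t in a..b, (b - t) ^ (n + 1) / (n + 1)! * h t := by
  have hint : ∀ p : ℝ → ℝ, Continuous p → IntervalIntegrable (fun t => p t * h t) volume a b :=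
    fun p hp => hh.continuousOn_mul hp.continuousOn
  simp only [peanoKernel, sub_mul, Finset.sum_mul, mul_assoc]
  have hterm : ∀ i, IntervalIntegrable (fun t => w i * ((x i - t)⁺ ^ n / n ! * h t)) volume a b :=
    fun i => (hint _ (by fun_prop)).const_mul (w i)
  have hsum : IntervalIntegrable (fun t => ∑ i, w i * ((x i - t)⁺ ^ n / n ! * h t)) volume a b := by
    simpa only [Finset.sum_fn] using IntervalIntegrable.sum Finset.univ fun i _ => hterm i
  rw [intervalIntegral.integral_sub hsum (hint _ (by fun_prop)),
    integral_finsetSum fun i _ => hterm i]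
  simp only [integral_const_mul]

theorem sum_sub_integral_eq_integral_peanoKernel_mul (hn : n ≠ 0) (hab : a < b)
    (hx : ∀ i, x i ∈ Icc a b)
    (hexact : ∀ k ≤ n, ∑ i, w i * (x i - a) ^ k = ∫ t in a..b, (t - a) ^ k)
    (hf : ContDiffOn ℝ (n + 1) f (Icc a b)) :
    ∑ i, w i * f (x i) - ∫ t in a..b, f t =
      ∫ t in a..b, peanoKernel n b w x t * iteratedDerivWithin (n + 1) f (Icc a b) t := by
  set c : ℕ → ℝ := fun k => iteratedDerivWithin k f (Icc a b) a
  set g := iteratedDerivWithin (n + 1) f (Icc a b)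
  have hg : IntervalIntegrable g volume a b :=
    (hf.continuousOn_iteratedDerivWithin le_rfl (uniqueDiffOn_Icc hab)).intervalIntegrable_of_Icc
      hab.le
  have hnode : ∀ i, f (x i) = ∑ k ∈ Finset.range (n + 1), (x i - a) ^ k / k ! * c k +
      ∫ t in a..b, (x i - t)⁺ ^ n / n ! * g t := fun i => by
    rw [integral_posPart_pow_mul hn (hx i) hg]
    exact taylor_integral_remainder_Icc hf (hx i)
  have hpoly : ∑ i, w i * ∑ k ∈ Finset.range (n + 1), (x i - a) ^ k / k ! * c k =
      ∑ k ∈ Finset.range (n + 1), (b - a) ^ (k + 1) / (k + 1)! * c k := by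
    simp_rw [Finset.mul_sum]
    rw [Finset.sum_comm]
    refine Finset.sum_congr rfl fun k hk => ?_
    have hwk := hexact k (Nat.lt_succ_iff.1 (Finset.mem_range.1 hk))
    rw [integral_comp_sub_right (fun t => t ^ k), integral_pow, sub_self,
      zero_pow k.succ_ne_zero, sub_zero] at hwk
    calc ∑ i, w i * ((x i - a) ^ k / k ! * c k) = (∑ i, w i * (x i - a) ^ k) / k ! * c k := by
          rw [Finset.sum_div, Finset.sum_mul]
          exact Finset.sum_congr rfl fun i _ => by ring
      _ = (b - a) ^ (k + 1) / (k + 1)! * c k := by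
          rw [hwk, Nat.factorial_succ]
          push_cast
          field_simp
  rw [integral_peanoKernel_mul hg, integral_eq_taylor_add_remainder_Icc hab hf]
  simp_rw [hnode, mul_add, Finset.sum_add_distrib, hpoly]
  ring

theorem integral_peanoKernel (hn : n ≠ 0) (hx : ∀ i, x i ∈ Icc a b) :
    ∫ t in a..b, peanoKernel n b w x t =
      ∑ i, w i * ((x i - a) ^ (n + 1) / (n + 1)!) - (b - a) ^ (n + 2) / (n + 2)! := by
  have hone : IntervalIntegrable (fun _ => (1 : ℝ)) volume a b := intervalIntegrable_const
  have h := integral_peanoKernel_mul (n := n) (b := b) (w := w) (x := x) hone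
  have hnode (i) : ∫ t in a..b, (x i - t)⁺ ^ n / n ! = (x i - a) ^ (n + 1) / (n + 1)! := by
    simpa only [mul_one, integral_sub_pow_div_factorial] using
      integral_posPart_pow_mul hn (hx i) hone
  simp only [mul_one, hnode, integral_sub_pow_div_factorial] at h
  exact h

theorem exists_sum_sub_integral_eq_mul_iteratedDerivWithin (hn : n ≠ 0) (hab : a < b)
    (hx : ∀ i, x i ∈ Icc a b)
    (hexact : ∀ k ≤ n, ∑ i, w i * (x i - a) ^ k = ∫ t in a..b, (t - a) ^ k)
    (hK : ∀ t ∈ Icc a b, 0 ≤ peanoKernel n b w x t) (hf : ContDiffOn ℝ (n + 1) f (Icc a b)) :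
    ∃ ξ ∈ Icc a b, ∑ i, w i * f (x i) - ∫ t in a..b, f t =
      (∫ t in a..b, peanoKernel n b w x t) * iteratedDerivWithin (n + 1) f (Icc a b) ξ := by
  obtain ⟨ξ, hξ, h⟩ := exists_eq_const_mul_intervalIntegral_of_nonneg
    (f := iteratedDerivWithin (n + 1) f (Icc a b)) (g := peanoKernel n b w x) (μ := volume)
    (by rw [uIcc_of_le hab.le]
        exact hf.continuousOn_iteratedDerivWithin le_rfl (uniqueDiffOn_Icc hab))
    (continuous_peanoKernel.intervalIntegrable _ _)
    (fun t ht => hK t (by rw [uIoc_of_le hab.le] at ht; exact Ioc_subset_Icc_self ht))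
  rw [uIcc_of_le hab.le] at hξ
  refine ⟨ξ, hξ, ?_⟩
  rw [sum_sub_integral_eq_integral_peanoKernel_mul hn hab hx hexact hf, mul_comm, ← h]
  simp only [mul_comm]

end PeanoKernel

section GaussSimpson

noncomputable def gaussSimpsonNodes : Fin 5 → ℝ := ![-1, -(√3 / 3), 0, √3 / 3, 1]

noncomputable def gaussSimpsonWeights : Fin 5 → ℝ := ![1 / 6, 1 / 2, 2 / 3, 1 / 2, 1 / 6]

theorem sum_gaussSimpson (g : ℝ → ℝ) :
    ∑ i, gaussSimpsonWeights i * g (gaussSimpsonNodes i) =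
      (g (-1) + 4 * g 0 + g 1) / 6 + (g (-(√3 / 3)) + g (√3 / 3)) / 2 := by
  simp only [Fin.sum_univ_five, gaussSimpsonNodes, gaussSimpsonWeights, Fin.isValue,
    Matrix.cons_val_zero, Matrix.cons_val_one, Matrix.cons_val]
  ring

theorem sqrt_three_div_three_sq : (√3 / 3) ^ 2 = 1 / 3 := by
  rw [div_pow, Real.sq_sqrt (by norm_num)]
  norm_num

theorem sqrt_three_div_three_mem : √3 / 3 ∈ Ioo (1 / 3 : ℝ) (3 / 5) := by
  have h := sqrt_three_div_three_sq
  have hpos : 0 < √3 / 3 := by positivity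
  constructor <;> nlinarith

theorem gaussSimpsonNodes_mem (i : Fin 5) : gaussSimpsonNodes i ∈ Icc (-1) 1 := by
  obtain ⟨h1, h2⟩ := sqrt_three_div_three_mem
  fin_cases i <;> simp only [gaussSimpsonNodes, Fin.zero_eta, Fin.mk_one, Fin.reduceFinMk,
    Fin.isValue, Matrix.cons_val_zero, Matrix.cons_val_one, Matrix.cons_val, mem_Icc] <;>
    constructor <;> linarith

theorem gaussSimpson_exact (k : ℕ) (hk : k ≤ 3) :
    ∑ i, gaussSimpsonWeights i * (gaussSimpsonNodes i - -1) ^ k =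
      ∫ t in (-1 : ℝ)..1, (t - -1) ^ k := by
  have h := sqrt_three_div_three_sq
  rw [sum_gaussSimpson (fun y => (y - -1) ^ k), integral_comp_sub_right (fun t => t ^ k),
    integral_pow]
  interval_cases k <;> norm_num <;> linarith

theorem peanoKernel_gaussSimpson_nonneg (t : ℝ) (ht : t ∈ Icc (-1) 1) :
    0 ≤ peanoKernel 3 1 gaussSimpsonWeights gaussSimpsonNodes t := by
  obtain ⟨hs1, hs2⟩ := sqrt_three_div_three_mem
  have hsq := sqrt_three_div_three_sq
  rw [peanoKernel, sum_gaussSimpson (fun y => (y - t)⁺ ^ 3 / 3 !)]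
  set s := √3 / 3
  rw [posPart_eq_zero.2 (by linarith [ht.1] : -1 - t ≤ 0),
    posPart_eq_self.2 (by linarith [ht.2] : 0 ≤ 1 - t)]
  -- on the outer pieces, `K t = (1 - |t|) ^ 3 * (3 * |t| - 1) / 72`
  rcases le_total t (-s) with h1 | h1
  · rw [posPart_eq_self.2 (by linarith : 0 ≤ -s - t), posPart_eq_self.2 (by linarith : 0 ≤ 0 - t),
      posPart_eq_self.2 (by linarith : 0 ≤ s - t)]
    nlinarith [mul_nonneg (pow_nonneg (by linarith [ht.1] : (0:ℝ) ≤ 1 + t) 3)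
      (by linarith : (0:ℝ) ≤ -3 * t - 1)]
  rcases le_total t 0 with h2 | h2
  · rw [posPart_eq_zero.2 (by linarith : -s - t ≤ 0), posPart_eq_self.2 (by linarith : 0 ≤ 0 - t),
      posPart_eq_self.2 (by linarith : 0 ≤ s - t)]
    nlinarith [mul_nonneg (neg_nonneg.2 h2) (by linarith : (0:ℝ) ≤ s + t), sq_nonneg t,
      sq_nonneg (t + s), sq_nonneg (t * (t + s)), pow_nonneg (neg_nonneg.2 h2) 3,
      pow_nonneg (neg_nonneg.2 h2) 4]
  rcases le_total t s with h3 | h3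
  · rw [posPart_eq_zero.2 (by linarith : -s - t ≤ 0), posPart_eq_zero.2 (by linarith : 0 - t ≤ 0),
      posPart_eq_self.2 (by linarith : 0 ≤ s - t)]
    nlinarith [mul_nonneg h2 (sub_nonneg.2 h3), sq_nonneg t, sq_nonneg (t - s),
      sq_nonneg (t * (t - s)), pow_nonneg h2 3, pow_nonneg h2 4]
  · rw [posPart_eq_zero.2 (by linarith : -s - t ≤ 0), posPart_eq_zero.2 (by linarith : 0 - t ≤ 0),
      posPart_eq_zero.2 (by linarith : s - t ≤ 0)]
    nlinarith [mul_nonneg (pow_nonneg (by linarith [ht.2] : (0:ℝ) ≤ 1 - t) 3)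
      (by linarith : (0:ℝ) ≤ 3 * t - 1)]

theorem integral_peanoKernel_gaussSimpson :
    ∫ t in (-1 : ℝ)..1, peanoKernel 3 1 gaussSimpsonWeights gaussSimpsonNodes t = 1 / 540 := by
  have h := sqrt_three_div_three_sq
  rw [integral_peanoKernel three_ne_zero gaussSimpsonNodes_mem,
    sum_gaussSimpson (fun y => (y - -1) ^ (3 + 1) / (3 + 1)!)]
  set s := √3 / 3
  norm_num [Nat.factorial]
  linear_combination (12 + 2 * (s ^ 2 + 1 / 3)) / 48 * h

end GaussSimpson

theorem error_gauss2_lobatto3 (f : ℝ → ℝ) (hf : ContDiffOn ℝ 4 f (Set.Icc (-1:ℝ) 1)) :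
    ∃ ξ ∈ Set.Icc (-1:ℝ) 1,
      (∫ t in (-1:ℝ)..1, f t) =
        (1 / 2) * (f (-(Real.sqrt 3) / 3) + f (Real.sqrt 3 / 3)) +
        (1 / 2) * ((1 / 3) * f (-1) + (4 / 3) * f 0 + (1 / 3) * f 1) -
        iteratedDerivWithin 4 f (Set.Icc (-1:ℝ) 1) ξ / 540 := by
  obtain ⟨ξ, hξ, h⟩ := exists_sum_sub_integral_eq_mul_iteratedDerivWithin three_ne_zero
    (by norm_num) gaussSimpsonNodes_mem gaussSimpson_exact peanoKernel_gaussSimpson_nonneg hf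
  rw [integral_peanoKernel_gaussSimpson, sum_gaussSimpson f] at h
  refine ⟨ξ, hξ, ?_⟩
  rw [neg_div]
  linarith
end
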